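/- arXiv:2208.06329 — 7 statements merged into one kernel-verified Lean document; each statement's English description precedes it below -/
import Mathlib

section
/- Suppose the modular program signature is structurally valid and I is a valid selection. Then the restricted signature Limit(I) is structurally valid: its module dependency graph has no directed cycle, and every hole h has impls_{Limit(I)}(h) ≠ ∅. -/
/-- `pars I` is the image of `par` on the finset `I` of implementations. -/
def pars {ι κ : Type*} [DecidableEq κ] (par : ι → κ) (I : Finset ι) : Finset κ :=
  I.image par

/-- `holesOf I` is the union of the holes referenced by the implementations in `I`. -/
def holesOf {ι κ : Type*} [DecidableEq ι] [DecidableEq κ]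
    (holes : ι → Finset κ) (I : Finset ι) : Finset κ :=
  I.biUnion holes

/-- `implsH h` is the finset of implementations of the hole `h`. -/
def implsH {ι κ : Type*} [Fintype ι] [DecidableEq κ] (par : ι → κ) (h : κ) : Finset ι :=
  Finset.univ.filter (fun i => par i = h)

/-- `implsHs H` is the finset of implementations of holes in `H`. -/
def implsHs {ι κ : Type*} [Fintype ι] [DecidableEq κ] (par : ι → κ) (H : Finset κ) : Finset ι :=
  Finset.univ.filter (fun i => par i ∈ H)

/-- `siblings I₁ I₂` is the finset of pairs of distinct implementations across `I₁`, `I₂`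
sharing a parent hole. -/
def siblings {ι κ : Type*} [DecidableEq ι] [DecidableEq κ]
    (par : ι → κ) (I₁ I₂ : Finset ι) : Finset (ι × ι) :=
  (I₁ ×ˢ I₂).filter (fun p => p.1 ≠ p.2 ∧ par p.1 = par p.2)

/-- A finset `I` of implementations is a valid selection. -/
def ValidSelection {ι κ : Type*} [DecidableEq ι] [DecidableEq κ]
    (par : ι → κ) (holes : ι → Finset κ) (baseHoles : Finset κ) (I : Finset ι) : Prop :=
  pars par I = baseHoles ∪ holesOf holes I ∧ siblings par I I = ∅

/-- The module dependency graph: vertices are implementations plus one base node (`none`);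
there is an edge `i₁ → i₂` whenever `par i₂ ∈ holes i₁`, and an edge `base → i₂`
whenever `par i₂ ∈ baseHoles`. -/
def MDG {ι κ : Type*} (par : ι → κ) (holes : ι → Finset κ) (baseHoles : Finset κ) :
    Option ι → Option ι → Prop
  | some i₁, some i₂ => par i₂ ∈ holes i₁
  | none, some i₂ => par i₂ ∈ baseHoles
  | _, none => False

/-- Structural validity of a modular program signature: the module dependency graph has
no directed cycle, and every hole has at least one implementation. -/
def StructValid {ι κ : Type*} [Fintype ι] [DecidableEq κ]
    (par : ι → κ) (holes : ι → Finset κ) (baseHoles : Finset κ) : Prop :=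
  Irreflexive (Relation.TransGen (MDG par holes baseHoles)) ∧
  ∀ h : κ, (implsH par h).Nonempty

/-- The hole dependency graph `G_Dep`: an edge `h₁ → h₂` iff some implementation of `h₁`
references `h₂`. -/
def GDep {ι κ : Type*} (par : ι → κ) (holes : ι → Finset κ) (h₁ h₂ : κ) : Prop :=
  ∃ i : ι, par i = h₁ ∧ h₂ ∈ holes i

/-- `Hs 1, …, Hs n` is an enumeration of all holes in a topological order of the hole
dependency graph. -/
def TopoEnum {ι κ : Type*} (par : ι → κ) (holes : ι → Finset κ) (n : ℕ) (Hs : ℕ → κ) : Prop :=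
  (∀ h : κ, ∃ j, 1 ≤ j ∧ j ≤ n ∧ Hs j = h) ∧
  (∀ j k, 1 ≤ j → j ≤ n → 1 ≤ k → k ≤ n → Hs j = Hs k → j = k) ∧
  (∀ j k, 1 ≤ j → j ≤ n → 1 ≤ k → k ≤ n → GDep par holes (Hs j) (Hs k) → j < k)

/-- `Hpre Hs j` is the finset `{H₁, …, H_j}` of the first `j` holes of the enumeration. -/
def Hpre {κ : Type*} [DecidableEq κ] (Hs : ℕ → κ) (j : ℕ) : Finset κ :=
  (Finset.Icc 1 j).image Hs

/-- The implementations of the restricted signature `Limit(I)`: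
implementations `i` with `par i ∉ pars I` or `i ∈ I`. -/
def LimitImpls {ι κ : Type*} [Fintype ι] [DecidableEq ι] [DecidableEq κ]
    (par : ι → κ) (I : Finset ι) : Finset ι :=
  Finset.univ.filter (fun i => par i ∉ pars par I ∨ i ∈ I)

/-- The module dependency graph of the signature restricted to the allowed
implementations `A`. -/
def MDGRestr {ι κ : Type*} [DecidableEq ι]
    (par : ι → κ) (holes : ι → Finset κ) (baseHoles : Finset κ) (A : Finset ι) :
    Option ι → Option ι → Prop
  | some i₁, some i₂ => i₁ ∈ A ∧ i₂ ∈ A ∧ par i₂ ∈ holes i₁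
  | none, some i₂ => i₂ ∈ A ∧ par i₂ ∈ baseHoles
  | _, none => False

theorem MDGRestr_le_MDG {ι κ : Type*} [DecidableEq ι] (par : ι → κ)
    (holes : ι → Finset κ) (baseHoles : Finset κ) (A : Finset ι) :
    MDGRestr par holes baseHoles A ≤ MDG par holes baseHoles := by
  rintro (_ | _) (_ | _) hab
  exacts [hab.elim, hab.2, hab.elim, hab.2.2]

section LimitImpls

variable {ι κ : Type*} [Fintype ι] [DecidableEq ι] [DecidableEq κ] (par : ι → κ)
  {I : Finset ι} {h : κ}

theorem implsH_inter_limitImpls_of_mem (hh : h ∈ pars par I) :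
    implsH par h ∩ LimitImpls par I = implsH par h ∩ I := by
  ext i
  simp only [implsH, LimitImpls, Finset.mem_inter, Finset.mem_filter, Finset.mem_univ, true_and]
  constructor
  · rintro ⟨rfl, hi⟩
    exact ⟨rfl, hi.resolve_left (not_not.mpr hh)⟩
  · exact fun ⟨hpar, hi⟩ ↦ ⟨hpar, Or.inr hi⟩

theorem implsH_inter_limitImpls_of_not_mem (hh : h ∉ pars par I) :
    implsH par h ∩ LimitImpls par I = implsH par h := by
  refine Finset.inter_eq_left.mpr fun i hi ↦ ?_
  rw [implsH, Finset.mem_filter] at hi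
  simp [LimitImpls, hi.2, hh]

theorem implsH_inter_limitImpls_nonempty (hne : (implsH par h).Nonempty) :
    (implsH par h ∩ LimitImpls par I).Nonempty := by
  by_cases hh : h ∈ pars par I
  · obtain ⟨i, hi, rfl⟩ := Finset.mem_image.mp hh
    rw [implsH_inter_limitImpls_of_mem par hh]
    exact ⟨i, Finset.mem_inter.mpr ⟨by simp [implsH], hi⟩⟩
  · rwa [implsH_inter_limitImpls_of_not_mem par hh]

end LimitImpls

theorem limit_structValid_general {ι κ : Type*}
    [Fintype ι] [DecidableEq ι] [DecidableEq κ]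
    (par : ι → κ) (holes : ι → Finset κ) (baseHoles : Finset κ)
    (hvalid : StructValid par holes baseHoles)
    (I : Finset ι) :
    Irreflexive (Relation.TransGen (MDGRestr par holes baseHoles (LimitImpls par I))) ∧
    ∀ h : κ, (implsH par h ∩ LimitImpls par I).Nonempty := by
  obtain ⟨hacyclic, himpls⟩ := hvalid
  refine ⟨fun a ha ↦ hacyclic a ?_, fun h ↦ implsH_inter_limitImpls_nonempty par (himpls h)⟩
  exact Relation.TransGen.mono (MDGRestr_le_MDG par holes baseHoles _) a a ha

/-- `Limit(I)` is structurally valid: if the signature is structurally valid and `I` is a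
valid selection, the restricted signature's module dependency graph has no directed cycle
and every hole still has an implementation in `Limit(I)`. -/
theorem limit_structValid {ι κ : Type*}
    [Fintype ι] [DecidableEq ι] [Fintype κ] [DecidableEq κ]
    (par : ι → κ) (holes : ι → Finset κ) (baseHoles : Finset κ)
    (hvalid : StructValid par holes baseHoles)
    (I : Finset ι) (hI : ValidSelection par holes baseHoles I) :
    Irreflexive (Relation.TransGen (MDGRestr par holes baseHoles (LimitImpls par I))) ∧
    ∀ h : κ, (implsH par h ∩ LimitImpls par I).Nonempty :=
  limit_structValid_general par holes baseHoles hvalid I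
end

section
/- Suppose the modular program signature is structurally valid and I is a valid selection. For every valid selection I' with siblings(I, I') = {(i, i')} (a single sibling pair), the selection I' is a valid selection of the restricted signature Limit((I \ {i}) ∪ {i'}): every element of I' is an implementation of Limit((I \ {i}) ∪ {i'}), pars(I') = baseHoles ∪ holes(I'), and siblings(I', I') = ∅. -/
/-- Neighbors of `I` are valid under `Limit((I \ {i}) ∪ {i'})`: if `I'` is a valid
selection with `siblings(I, I') = {(i, i')}`, then `I'` is a valid selection of the
restricted signature `Limit((I \ {i}) ∪ {i'})`. -/
theorem neighbor_valid_in_limit {ι κ : Type*}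
    [Fintype ι] [DecidableEq ι] [Fintype κ] [DecidableEq κ]
    (par : ι → κ) (holes : ι → Finset κ) (baseHoles : Finset κ)
    (hvalid : StructValid par holes baseHoles)
    (I : Finset ι) (hI : ValidSelection par holes baseHoles I)
    (I' : Finset ι) (hI' : ValidSelection par holes baseHoles I')
    (i i' : ι) (hsib : siblings par I I' = {(i, i')}) :
    I' ⊆ LimitImpls par (insert i' (I.erase i)) ∧
    pars par I' = baseHoles ∪ holesOf holes I' ∧
    siblings par I' I' = ∅ := by
  have hii' : (i, i') ∈ siblings par I I' := by rw [hsib]; exact Finset.mem_singleton_self _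
  simp only [siblings, Finset.mem_filter, Finset.mem_product] at hii'
  obtain ⟨⟨hiI, hi'I'⟩, hne, hpar⟩ := hii'
  refine ⟨?_, hI'.1, hI'.2⟩
  intro j hj
  simp only [LimitImpls, Finset.mem_filter, Finset.mem_univ, true_and, pars,
    Finset.mem_image]
  by_cases hmem : ∃ k ∈ insert i' (I.erase i), par k = par j
  · right
    obtain ⟨k, hk, hpk⟩ := hmem
    rcases Finset.mem_insert.mp hk with hki' | hkI
    · subst hki'
      by_cases hji' : j = k
      · subst hji'; exact Finset.mem_insert_self _ _
      · exfalso
        have : (k, j) ∈ siblings par I' I' := by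
          simp only [siblings, Finset.mem_filter, Finset.mem_product]
          exact ⟨⟨hi'I', hj⟩, fun h => hji' h.symm, hpk⟩
        rw [hI'.2] at this
        exact Finset.notMem_empty _ this
    · by_cases hkj : k = j
      · subst hkj; exact Finset.mem_insert_of_mem hkI
      · exfalso
        have : (k, j) ∈ siblings par I I' := by
          simp only [siblings, Finset.mem_filter, Finset.mem_product]
          exact ⟨⟨Finset.mem_of_mem_erase hkI, hj⟩, hkj, hpk⟩
        rw [hsib, Finset.mem_singleton] at this
        exact (Finset.ne_of_mem_erase hkI) (congrArg Prod.fst this)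
  · left
    intro ⟨k, hk, hpk⟩
    exact hmem ⟨k, hk, hpk⟩
end

section
/- Suppose the modular program signature is structurally valid, I is a valid selection, i ∈ I, and i' ∈ impls(par(i)) with i' ≠ i. Then every valid selection I' of the restricted signature Limit((I \ {i}) ∪ {i'}) is a valid selection of the original signature and satisfies siblings(I, I') = {(i, i')}. -/
/-- Selections that are valid under `Limit((I \ {i}) ∪ {i'})` are neighbors of `I`:
every valid selection `I'` of the restricted signature is a valid selection of the
original signature with `siblings(I, I') = {(i, i')}`. -/
theorem limit_valid_is_neighbor {ι κ : Type*}
    [Fintype ι] [DecidableEq ι] [Fintype κ] [DecidableEq κ]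
    (par : ι → κ) (holes : ι → Finset κ) (baseHoles : Finset κ)
    (hvalid : StructValid par holes baseHoles)
    (I : Finset ι) (hI : ValidSelection par holes baseHoles I)
    (i i' : ι) (hiI : i ∈ I) (hpar : par i' = par i) (hne : i' ≠ i)
    (I' : Finset ι)
    (hsub : I' ⊆ LimitImpls par (insert i' (I.erase i)))
    (hval' : pars par I' = baseHoles ∪ holesOf holes I' ∧ siblings par I' I' = ∅) :
    ValidSelection par holes baseHoles I' ∧ siblings par I I' = {(i, i')} := by

  classical
  set J := insert i' (I.erase i) with hJ
  -- injectivity of par on I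
  have hinj : ∀ a ∈ I, ∀ b ∈ I, par a = par b → a = b := by
    intro a ha b hb hab
    by_contra hne2
    have : (a, b) ∈ siblings par I I := by
      simp [siblings, Finset.mem_filter, Finset.mem_product, ha, hb, hne2, hab]
    rw [hI.2] at this
    exact absurd this (Finset.notMem_empty _)
  have hparsJ : pars par J = pars par I := by
    have h1 : pars par J = insert (par i') ((I.erase i).image par) := Finset.image_insert _ _ _
    have h2 : pars par I = insert (par i) ((I.erase i).image par) := by
      conv_lhs => rw [← Finset.insert_erase hiI]
      exact Finset.image_insert _ _ _
    rw [h1, h2, hpar]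
  -- covering lemma
  have hcov : ∀ a ∈ I, ∀ c ∈ I', par c = par a → (a = i ∧ c = i') ∨ (c = a ∧ a ≠ i) := by
    intro a ha c hc hca
    have hcL := hsub hc
    simp only [LimitImpls, Finset.mem_filter, Finset.mem_univ, true_and] at hcL
    have hcJ : c ∈ J := by
      rcases hcL with h | h
      · exact absurd (hparsJ ▸ (hca ▸ Finset.mem_image_of_mem par ha)) h
      · exact h
    rcases Finset.mem_insert.mp hcJ with rfl | hcE
    · left
      refine ⟨hinj a ha i hiI ?_, rfl⟩
      rw [← hca, hpar]
    · right
      have hcI : c ∈ I := Finset.mem_of_mem_erase hcE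
      have hceq : c = a := hinj c hcI a ha hca
      refine ⟨hceq, ?_⟩
      rintro rfl
      exact (Finset.ne_of_mem_erase hcE) hceq
  -- well-foundedness
  let r : ι → ι → Prop := fun x y =>
    Relation.TransGen (MDG par holes baseHoles) (some x) (some y)
  have hirr : ∀ x, ¬ r x x := fun x h => hvalid.1 _ h
  have hwf : WellFounded r := by
    haveI : IsTrans ι r := ⟨fun a b c h1 h2 => Relation.TransGen.trans h1 h2⟩
    haveI : IsIrrefl ι r := ⟨hirr⟩
    exact Finite.wellFounded_of_trans_of_irrefl r
  have key : ∀ a : ι, a ∈ I →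
      (a = i ∨ Relation.TransGen (MDG par holes baseHoles) (some a) (some i)) →
      par a ∈ pars par I' := by
    intro a
    induction a using hwf.induction with
    | _ a ih =>
      intro haI hreach
      have hpa : par a ∈ baseHoles ∪ holesOf holes I := by
        rw [← hI.1]; exact Finset.mem_image_of_mem par haI
      rcases Finset.mem_union.mp hpa with hb | hh
      · rw [hval'.1]; exact Finset.mem_union_left _ hb
      · obtain ⟨b, hbI, hab⟩ := Finset.mem_biUnion.mp hh
        have hedge : MDG par holes baseHoles (some b) (some a) := hab
        have hreachb : Relation.TransGen (MDG par holes baseHoles) (some b) (some i) := by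
          rcases hreach with rfl | h
          · exact Relation.TransGen.single hedge
          · exact Relation.TransGen.head hedge h
        have hbne : b ≠ i := by rintro rfl; exact hvalid.1 _ hreachb
        have hb' : par b ∈ pars par I' :=
          ih b (Relation.TransGen.single hedge) hbI (Or.inr hreachb)
        obtain ⟨c, hcI', hc⟩ := Finset.mem_image.mp hb'
        rcases hcov b hbI c hcI' hc with ⟨hbi, _⟩ | ⟨rfl, _⟩
        · exact absurd hbi hbne
        · rw [hval'.1]
          exact Finset.mem_union_right _ (Finset.mem_biUnion.mpr ⟨c, hcI', hab⟩)
  have hpi : par i ∈ pars par I' := key i hiI (Or.inl rfl)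
  obtain ⟨c, hcI', hc⟩ := Finset.mem_image.mp hpi
  have hii' : i' ∈ I' := by
    rcases hcov i hiI c hcI' hc with ⟨_, rfl⟩ | ⟨_, hne3⟩
    · exact hcI'
    · exact absurd rfl hne3
  refine ⟨⟨hval'.1, hval'.2⟩, ?_⟩
  ext ⟨a, c⟩
  simp only [siblings, Finset.mem_filter, Finset.mem_product, Finset.mem_singleton,
    Prod.mk.injEq, ne_eq]
  constructor
  · rintro ⟨⟨haI, hcI2⟩, hne2, hpar2⟩
    rcases hcov a haI c hcI2 hpar2.symm with ⟨rfl, rfl⟩ | ⟨rfl, _⟩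
    · exact ⟨rfl, rfl⟩
    · exact absurd rfl hne2
  · rintro ⟨rfl, rfl⟩
    exact ⟨⟨hiI, hii'⟩, hne.symm, hpar.symm⟩
end

section
/- Suppose the modular program signature is structurally valid and I is a valid selection. Then the neighbor set Nei(I) = { I' | I' a valid selection with |siblings(I, I')| = 1 } satisfies Nei(I) = ⋃_{i ∈ I} ⋃_{i' ∈ impls(par(i)) \ {i}} { I' | I' a valid selection of Limit((I \ {i}) ∪ {i'}) }. -/
/-!
A neighbour `I'` of `I` trades exactly one implementation `i ∈ I` for a sibling `i'`, and since
`I'` picks at most one implementation per hole, it agrees with `I` on every other hole of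
`pars I`: it is a selection of `Limit((I \ {i}) ∪ {i'})`. Conversely, a valid selection `I'` of
that restricted signature can only pick `i'` or an element of `I` on the holes of `I`, so `(i, i')`
is its only possible sibling pair with `I`. It is an actual one because `I'` must contain `i'`:
otherwise `I'` agrees with `I` wherever it meets `pars I`, and well-founded induction along the
acyclic dependency graph shows that every implementation of `I` lies in `I'`, including `i`,
which `Limit` excludes.
-/

section Selections

variable {ι κ : Type*} [DecidableEq κ] (par : ι → κ)

lemma mem_pars {I : Finset ι} {h : κ} : h ∈ pars par I ↔ ∃ i ∈ I, par i = h :=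
  Finset.mem_image

lemma mem_siblings [DecidableEq ι] {I₁ I₂ : Finset ι} {p : ι × ι} :
    p ∈ siblings par I₁ I₂ ↔
      p.1 ∈ I₁ ∧ p.2 ∈ I₂ ∧ p.1 ≠ p.2 ∧ par p.1 = par p.2 := by
  simp [siblings, and_assoc]

lemma siblings_self_eq_empty_iff [DecidableEq ι] {I : Finset ι} :
    siblings par I I = ∅ ↔ Set.InjOn par I := by
  simp only [Finset.eq_empty_iff_forall_notMem, Prod.forall, mem_siblings, Set.InjOn,
    Finset.mem_coe]
  grind

lemma pars_insert_erase [DecidableEq ι] {I : Finset ι} {i i' : ι} (hi : i ∈ I)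
    (hpar : par i' = par i) : pars par (insert i' (I.erase i)) = pars par I := by
  ext h
  simp only [mem_pars, Finset.mem_insert, Finset.mem_erase]
  constructor
  · rintro ⟨j, rfl | ⟨-, hj⟩, rfl⟩
    · exact ⟨i, hi, hpar.symm⟩
    · exact ⟨j, hj, rfl⟩
  · rintro ⟨j, hj, rfl⟩
    by_cases hji : j = i
    · exact ⟨i', Or.inl rfl, by rw [hpar, hji]⟩
    · exact ⟨j, Or.inr ⟨hji, hj⟩, rfl⟩

lemma mem_of_mem_limitImpls [Fintype ι] [DecidableEq ι] {J : Finset ι} {x : ι}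
    (hx : x ∈ LimitImpls par J) (hpar : par x ∈ pars par J) : x ∈ J := by
  simp only [LimitImpls, Finset.mem_filter, Finset.mem_univ, true_and] at hx
  exact hx.resolve_left (not_not.mpr hpar)

end Selections

section Acyclic

variable {ι κ : Type*} {par : ι → κ} {holes : ι → Finset κ} {baseHoles : Finset κ}

lemma wellFounded_references [Finite ι]
    (hacyc : ∀ x, ¬Relation.TransGen (MDG par holes baseHoles) x x) :
    WellFounded (fun a c : ι => par c ∈ holes a) := by
  let r : ι → ι → Prop := fun a c => par c ∈ holes a
  have : IsTrans ι (Relation.TransGen r) := ⟨fun _ _ _ => Relation.TransGen.trans⟩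
  have : Std.Irrefl (Relation.TransGen r) :=
    ⟨fun a ha => hacyc (some a) (Relation.TransGen.lift some (fun _ _ h => h) a a ha)⟩
  exact Subrelation.wf (r := Relation.TransGen r) (fun h => Relation.TransGen.single h)
    (Finite.wellFounded_of_trans_of_irrefl _)

lemma subset_of_agree_on_pars [Finite ι] [DecidableEq ι] [DecidableEq κ]
    (hacyc : ∀ x, ¬Relation.TransGen (MDG par holes baseHoles) x x) {I I' : Finset ι}
    (hI : pars par I ⊆ baseHoles ∪ holesOf holes I)
    (hI' : baseHoles ∪ holesOf holes I' ⊆ pars par I')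
    (hagree : ∀ a ∈ I, par a ∈ pars par I' → a ∈ I') : I ⊆ I' := by
  intro c
  induction c using (wellFounded_references hacyc).induction with
  | _ c ih =>
    intro hc
    refine hagree c hc (hI' ?_)
    rcases Finset.mem_union.mp (hI (Finset.mem_image_of_mem par hc)) with hbase | hholes
    · exact Finset.mem_union_left _ hbase
    · obtain ⟨a, ha, hca⟩ := Finset.mem_biUnion.mp hholes
      exact Finset.mem_union_right _ (Finset.mem_biUnion.mpr ⟨a, ih a hca ha, hca⟩)

end Acyclic

section Neighbors

variable {ι κ : Type*} [Fintype ι] [DecidableEq ι] [DecidableEq κ] {par : ι → κ}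
  {I I' : Finset ι} {i i' : ι}

lemma subset_limitImpls_of_siblings_eq_singleton (hI' : Set.InjOn par I')
    (hsib : siblings par I I' = {(i, i')}) : I' ⊆ LimitImpls par (insert i' (I.erase i)) := by
  obtain ⟨hi, hi', hne, hpar⟩ := (mem_siblings par).mp (hsib ▸ Finset.mem_singleton_self _)
  intro x hx
  simp only [LimitImpls, Finset.mem_filter, Finset.mem_univ, true_and,
    pars_insert_erase par hi hpar.symm, or_iff_not_imp_left, not_not]
  intro hxpar
  obtain ⟨j, hj, hjx⟩ := (mem_pars par).mp hxpar
  by_cases hxj : x = j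
  · subst hxj
    have hxi : x ≠ i := by
      rintro rfl
      exact hne (hI' hx hi' hpar)
    exact Finset.mem_insert_of_mem (Finset.mem_erase.mpr ⟨hxi, hj⟩)
  · have hjx_sib : (j, x) ∈ siblings par I I' :=
      (mem_siblings par).mpr ⟨hj, hx, Ne.symm hxj, hjx⟩
    rw [hsib, Finset.mem_singleton, Prod.mk.injEq] at hjx_sib
    exact hjx_sib.2 ▸ Finset.mem_insert_self _ _

lemma siblings_subset_singleton_of_subset_limitImpls (hI : Set.InjOn par I) (hi : i ∈ I)
    (hpar : par i' = par i) (hsub : I' ⊆ LimitImpls par (insert i' (I.erase i))) :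
    siblings par I I' ⊆ {(i, i')} := by
  rintro ⟨a, b⟩ hab
  obtain ⟨ha, hb, hne, hparab⟩ : a ∈ I ∧ b ∈ I' ∧ a ≠ b ∧ par a = par b :=
    (mem_siblings par).mp hab
  have hbJ : b ∈ insert i' (I.erase i) := mem_of_mem_limitImpls par (hsub hb)
    (by rw [pars_insert_erase par hi hpar]; exact (mem_pars par).mpr ⟨a, ha, hparab⟩)
  rcases Finset.mem_insert.mp hbJ with rfl | hbI
  · rw [hI ha hi (hparab.trans hpar), Finset.mem_singleton]
  · exact absurd (hI ha (Finset.mem_of_mem_erase hbI) hparab) hne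

lemma mem_of_subset_limitImpls {holes : ι → Finset κ} {baseHoles : Finset κ}
    (hacyc : ∀ x, ¬Relation.TransGen (MDG par holes baseHoles) x x)
    (hI : pars par I ⊆ baseHoles ∪ holesOf holes I) (hinj : Set.InjOn par I)
    (hI' : baseHoles ∪ holesOf holes I' ⊆ pars par I')
    (hi : i ∈ I) (hpar : par i' = par i) (hne : i' ≠ i)
    (hsub : I' ⊆ LimitImpls par (insert i' (I.erase i))) : i' ∈ I' := by
  have hparsJ := pars_insert_erase par hi hpar
  by_contra hi'
  have hagree : ∀ a ∈ I, par a ∈ pars par I' → a ∈ I' := by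
    intro a ha hapar
    obtain ⟨b, hb, hba⟩ := (mem_pars par).mp hapar
    have hbJ : b ∈ insert i' (I.erase i) := mem_of_mem_limitImpls par (hsub hb)
      (by rw [hparsJ, hba]; exact Finset.mem_image_of_mem par ha)
    rcases Finset.mem_insert.mp hbJ with rfl | hbI
    · exact absurd hb hi'
    · exact hinj (Finset.mem_of_mem_erase hbI) ha hba ▸ hb
  have hiI' := subset_of_agree_on_pars hacyc hI hI' hagree hi
  have hiJ : i ∈ insert i' (I.erase i) := mem_of_mem_limitImpls par (hsub hiI')
    (by rw [hparsJ]; exact Finset.mem_image_of_mem par hi)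
  simp [hne.symm] at hiJ

end Neighbors

theorem neighbors_eq_union_limit_general {ι κ : Type*}
    [Fintype ι] [DecidableEq ι] [DecidableEq κ]
    (par : ι → κ) (holes : ι → Finset κ) (baseHoles : Finset κ)
    (hvalid : StructValid par holes baseHoles)
    (I : Finset ι) (hI : ValidSelection par holes baseHoles I) :
    {I' : Finset ι | ValidSelection par holes baseHoles I' ∧
        (siblings par I I').card = 1} =
      ⋃ i ∈ (I : Set ι), ⋃ i' ∈ {i' : ι | par i' = par i ∧ i' ≠ i},
        {I' : Finset ι | I' ⊆ LimitImpls par (insert i' (I.erase i)) ∧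
          ValidSelection par holes baseHoles I'} := by
  ext I'
  simp only [Set.mem_ofPred_eq, Set.mem_iUnion, Finset.mem_coe, Finset.card_eq_one]
  constructor
  · rintro ⟨hI', ⟨i, i'⟩, hsib⟩
    obtain ⟨hi, -, hne, hpar⟩ := (mem_siblings par).mp (hsib ▸ Finset.mem_singleton_self _)
    exact ⟨i, hi, i', ⟨hpar.symm, Ne.symm hne⟩, subset_limitImpls_of_siblings_eq_singleton
      ((siblings_self_eq_empty_iff par).mp hI'.2) hsib, hI'⟩
  · rintro ⟨i, hi, i', ⟨hpar, hne⟩, hsub, hI'⟩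
    have hinj := (siblings_self_eq_empty_iff par).mp hI.2
    have hi' : i' ∈ I' := mem_of_subset_limitImpls hvalid.1 hI.1.le hinj hI'.1.ge hi hpar hne hsub
    have hpair : (i, i') ∈ siblings par I I' :=
      (mem_siblings par).mpr ⟨hi, hi', Ne.symm hne, hpar.symm⟩
    have hsub_pair := siblings_subset_singleton_of_subset_limitImpls hinj hi hpar hsub
    exact ⟨hI', (i, i'), hsub_pair.antisymm (Finset.singleton_subset_iff.mpr hpair)⟩

/-- The neighbor set `Nei(I)` — the valid selections sharing exactly one sibling pair with
`I` — is the union, over `i ∈ I` and `i' ∈ impls(par(i)) \ {i}`, of the valid selections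
of the restricted signature `Limit((I \ {i}) ∪ {i'})`. -/
theorem neighbors_eq_union_limit {ι κ : Type*}
    [Fintype ι] [DecidableEq ι] [Fintype κ] [DecidableEq κ]
    (par : ι → κ) (holes : ι → Finset κ) (baseHoles : Finset κ)
    (hvalid : StructValid par holes baseHoles)
    (I : Finset ι) (hI : ValidSelection par holes baseHoles I) :
    {I' : Finset ι | ValidSelection par holes baseHoles I' ∧
        (siblings par I I').card = 1} =
      ⋃ i ∈ (I : Set ι), ⋃ i' ∈ {i' : ι | par i' = par i ∧ i' ≠ i},
        {I' : Finset ι | I' ⊆ LimitImpls par (insert i' (I.erase i)) ∧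
          ValidSelection par holes baseHoles I'} :=
  neighbors_eq_union_limit_general par holes baseHoles hvalid I hI
end

section
/- Let C be a type of code fragments (including a distinguished base element and all implementations), let par : ℐ → ℋ and let i₁, …, i_N be a finite sequence of implementations. Suppose holes₀, holes₁, …, holes_N : C → Finset ℋ is a family of functions satisfying the single-application recurrence: for each j ∈ {1, …, N} and each c ∈ C, holes_j(c) = (holes_{j-1}(c) ∪ holes_{j-1}(i_j)) \ {par(i_j)} if par(i_j) ∈ holes_{j-1}(c), and holes_j(c) = holes_{j-1}(c) otherwise. Then for every c ∈ C, holes_N(c) ⊆ (holes₀(c) ∪ ⋃_{j=1}^{N} holes₀(i_j)) \ {par(i_j) | 1 ≤ j ≤ N}. -/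
/-- `ApplyImpls` adds the applied implementations' holes and removes the holes they fill:
if the family `holesF 0, …, holesF N` of hole-sets of code fragments satisfies the
single-application (`ApplyImpl`) recurrence along the sequence of implementations
`iseq 1, …, iseq N`, then for every code fragment `c`,
`holesF N c ⊆ (holesF 0 c ∪ ⋃_j holesF 0 (iseq j)) \ {par (iseq j) | 1 ≤ j ≤ N}`. -/
theorem applyImpls_holes_subset {C ι κ : Type*} [DecidableEq κ]
    (impl : ι → C) (par : ι → κ) (N : ℕ) (iseq : ℕ → ι)
    (holesF : ℕ → C → Finset κ)
    (hrec : ∀ j, 1 ≤ j → j ≤ N → ∀ c : C,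
      holesF j c =
        if par (iseq j) ∈ holesF (j - 1) c then
          (holesF (j - 1) c ∪ holesF (j - 1) (impl (iseq j))) \ {par (iseq j)}
        else holesF (j - 1) c) :
    ∀ c : C,
      holesF N c ⊆
        (holesF 0 c ∪ (Finset.Icc 1 N).biUnion (fun j => holesF 0 (impl (iseq j)))) \
          (Finset.Icc 1 N).image (fun j => par (iseq j)) := by
  suffices h : ∀ j, j ≤ N → ∀ c : C,
      (holesF j c ⊆ holesF 0 c ∪ (Finset.Icc 1 j).biUnion (fun k => holesF 0 (impl (iseq k)))) ∧
      ∀ k, 1 ≤ k → k ≤ j → par (iseq k) ∉ holesF j c by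
    intro c x hx
    rw [Finset.mem_sdiff]
    refine ⟨(h N le_rfl c).1 hx, fun hmem => ?_⟩
    rw [Finset.mem_image] at hmem
    obtain ⟨k, hk, hpar⟩ := hmem
    rw [Finset.mem_Icc] at hk
    exact (h N le_rfl c).2 k hk.1 hk.2 (hpar ▸ hx)
  intro j
  induction j with
  | zero => exact fun _ c => ⟨by simp, fun k hk hk0 => by omega⟩
  | succ j ih =>
    intro hjN c
    have hj : j ≤ N := Nat.le_of_succ_le hjN
    have hrecj := hrec (j+1) (by omega) hjN c
    simp only [Nat.add_sub_cancel] at hrecj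
    have hsub : (Finset.Icc 1 j).biUnion (fun k => holesF 0 (impl (iseq k))) ⊆
        (Finset.Icc 1 (j+1)).biUnion (fun k => holesF 0 (impl (iseq k))) :=
      Finset.biUnion_subset_biUnion_of_subset_left _ (Finset.Icc_subset_Icc_right (by omega))
    by_cases hc : par (iseq (j+1)) ∈ holesF j c
    · rw [hrecj, if_pos hc]
      constructor
      · intro x hx
        rw [Finset.mem_sdiff, Finset.mem_union] at hx
        rcases hx.1 with hx1 | hx1
        · rcases Finset.mem_union.1 ((ih hj c).1 hx1) with h1 | h1
          · exact Finset.mem_union_left _ h1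
          · exact Finset.mem_union_right _ (hsub h1)
        · rcases Finset.mem_union.1 ((ih hj (impl (iseq (j+1)))).1 hx1) with h1 | h1
          · exact Finset.mem_union_right _
              (Finset.mem_biUnion.2 ⟨j+1, Finset.mem_Icc.2 ⟨by omega, le_rfl⟩, h1⟩)
          · exact Finset.mem_union_right _ (hsub h1)
      · intro k hk1 hk2 hmem
        rw [Finset.mem_sdiff, Finset.mem_union] at hmem
        rcases Nat.lt_or_ge k (j+1) with hlt | hge
        · rcases hmem.1 with h1 | h1
          · exact (ih hj c).2 k hk1 (by omega) h1
          · exact (ih hj (impl (iseq (j+1)))).2 k hk1 (by omega) h1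
        · have hkeq : k = j+1 := by omega
          exact hmem.2 (by simp [hkeq])
    · rw [hrecj, if_neg hc]
      refine ⟨fun x hx => ?_, fun k hk1 hk2 hmem => ?_⟩
      · rcases Finset.mem_union.1 ((ih hj c).1 hx) with h1 | h1
        · exact Finset.mem_union_left _ h1
        · exact Finset.mem_union_right _ (hsub h1)
      · rcases Nat.lt_or_ge k (j+1) with hlt | _
        · exact (ih hj c).2 k hk1 (by omega) hmem
        · have hkeq : k = j+1 := by omega
          exact hc (hkeq ▸ hmem)
end

section
/- Let C be a type of code fragments with a distinguished base element b, let par : ℐ → ℋ, holes₀ : C → Finset ℋ, and let i₁, …, i_N be a finite sequence of distinct implementations whose underlying finset I = {i₁, …, i_N} satisfies {par(i) | i ∈ I} = holes₀(b) ∪ ⋃_{i ∈ I} holes₀(i). Suppose holes₀, holes₁, …, holes_N : C → Finset ℋ satisfies the single-application recurrence: for each j ∈ {1, …, N} and each c ∈ C, holes_j(c) = (holes_{j-1}(c) ∪ holes_{j-1}(i_j)) \ {par(i_j)} if par(i_j) ∈ holes_{j-1}(c), and holes_j(c) = holes_{j-1}(c) otherwise. Then holes_N(b) = ∅ (the concretized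 program has no holes). -/
/-- `Concretize` leaves no holes: if the family `holesF 0, …, holesF N` of hole-sets of
code fragments satisfies the single-application (`ApplyImpl`) recurrence along a sequence
of distinct implementations `iseq 1, …, iseq N` whose underlying finset `I` satisfies the
valid-selection covering condition `pars(I) = holes₀(b) ∪ ⋃_{i ∈ I} holes₀(i)`, then the
base `b` has no holes left: `holesF N b = ∅`. -/
theorem concretize_no_holes {C ι κ : Type*} [DecidableEq ι] [DecidableEq κ]
    (impl : ι → C) (par : ι → κ) (b : C) (N : ℕ) (iseq : ℕ → ι)
    (holesF : ℕ → C → Finset κ)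
    (hinj : ∀ j ∈ Finset.Icc 1 N, ∀ k ∈ Finset.Icc 1 N, iseq j = iseq k → j = k)
    (hcover : ((Finset.Icc 1 N).image iseq).image par =
      holesF 0 b ∪ ((Finset.Icc 1 N).image iseq).biUnion (fun i => holesF 0 (impl i)))
    (hrec : ∀ j, 1 ≤ j → j ≤ N → ∀ c : C,
      holesF j c =
        if par (iseq j) ∈ holesF (j - 1) c then
          (holesF (j - 1) c ∪ holesF (j - 1) (impl (iseq j))) \ {par (iseq j)}
        else holesF (j - 1) c) :
    holesF N b = ∅ := by
  set U := ((Finset.Icc 1 N).image iseq).biUnion (fun i => holesF 0 (impl i)) with hU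
  -- (B): hole sets stay inside initial holes plus U
  have hB : ∀ j, j ≤ N → ∀ c, holesF j c ⊆ holesF 0 c ∪ U := by
    intro j
    induction j with
    | zero => intro _ c; exact Finset.subset_union_left
    | succ j ih =>
      intro hjN c
      have h1 : j ≤ N := Nat.le_of_succ_le hjN
      have hr := hrec (j + 1) (Nat.succ_le_succ (Nat.zero_le j)) hjN c
      simp only [Nat.add_sub_cancel] at hr
      rw [hr]
      have hmem : iseq (j + 1) ∈ (Finset.Icc 1 N).image iseq :=
        Finset.mem_image_of_mem _
          (Finset.mem_Icc.mpr ⟨Nat.succ_le_succ (Nat.zero_le j), hjN⟩)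
      have himpl : holesF 0 (impl (iseq (j + 1))) ⊆ U := fun x hx =>
        Finset.mem_biUnion.mpr ⟨_, hmem, hx⟩
      split
      · intro x hx
        rcases Finset.mem_union.mp (Finset.mem_sdiff.mp hx).1 with h | h
        · exact ih h1 c h
        · rcases Finset.mem_union.mp (ih h1 _ h) with h' | h'
          · exact Finset.mem_union_right _ (himpl h')
          · exact Finset.mem_union_right _ h'
      · exact ih h1 c
  -- (A): once implementation `iseq j` is applied, hole `par (iseq j)` never reappears
  have hA : ∀ j, 1 ≤ j → ∀ d, j + d ≤ N → ∀ c, par (iseq j) ∉ holesF (j + d) c := by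
    intro j hj1 d
    induction d with
    | zero =>
      intro hjN c
      rw [Nat.add_zero] at hjN ⊢
      rw [hrec j hj1 hjN c]
      split
      · intro h
        exact (Finset.mem_sdiff.mp h).2 (Finset.mem_singleton_self _)
      · next h => exact h
    | succ d ih =>
      intro hjN c
      have h1 : j + d ≤ N := by omega
      have hge1 : 1 ≤ j + d + 1 := by omega
      have hr := hrec (j + d + 1) hge1 (by omega : j + d + 1 ≤ N) c
      simp only [Nat.add_sub_cancel] at hr
      have : j + (d + 1) = j + d + 1 := by omega
      rw [this, hr]
      split
      · intro h
        rcases Finset.mem_union.mp (Finset.mem_sdiff.mp h).1 with h' | h'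
        · exact ih h1 c h'
        · exact ih h1 _ h'
      · exact ih h1 c
  -- combine
  have hsub : holesF N b ⊆ ((Finset.Icc 1 N).image iseq).image par := by
    rw [hcover]; exact hB N le_rfl b
  rw [Finset.eq_empty_iff_forall_notMem]
  intro x hx
  obtain ⟨i, hi, hpar⟩ := Finset.mem_image.mp (hsub hx)
  obtain ⟨j, hj, hij⟩ := Finset.mem_image.mp hi
  obtain ⟨hj1, hjN⟩ := Finset.mem_Icc.mp hj
  have hN : j + (N - j) = N := by omega
  have := hA j hj1 (N - j) (by omega) b
  rw [hN, hij, hpar] at this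
  exact this hx
end

section
/- Let par : ℐ → ℋ and holes : ℐ → Finset ℋ, and assume every hole has at least one implementation (for every h : ℋ there exists i with par(i) = h). If the module dependency graph — the directed graph on ℐ with an edge i₁ → i₂ whenever par(i₂) ∈ holes(i₁) — has no directed cycle, then the hole dependency graph — the directed graph on ℋ with an edge h₁ → h₂ whenever there exists i with par(i) = h₁ and h₂ ∈ holes(i) — also has no directed cycle. -/
/-- If every hole has an implementation and the module dependency graph
(`i₁ → i₂` iff `par i₂ ∈ holes i₁`) has no directed cycle, then the hole dependency graph
(`h₁ → h₂` iff some implementation of `h₁` references `h₂`) has no directed cycle. -/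
theorem holeDep_acyclic_of_implDep_acyclic {ι κ : Type*}
    (par : ι → κ) (holes : ι → Finset κ)
    (hne : ∀ h : κ, ∃ i : ι, par i = h)
    (hacyc : Irreflexive (Relation.TransGen (fun i₁ i₂ : ι => par i₂ ∈ holes i₁))) :
    Irreflexive (Relation.TransGen (fun h₁ h₂ : κ => ∃ i : ι, par i = h₁ ∧ h₂ ∈ holes i)) := by
  intro h hcyc
  suffices H : ∀ {h₁ h₂ : κ},
      Relation.TransGen (fun h₁ h₂ : κ => ∃ i : ι, par i = h₁ ∧ h₂ ∈ holes i) h₁ h₂ →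
      ∃ i₁ : ι, par i₁ = h₁ ∧ ∀ j : ι, par j = h₂ →
        Relation.TransGen (fun i₁ i₂ : ι => par i₂ ∈ holes i₁) i₁ j by
    obtain ⟨i₁, hpar, hpath⟩ := H hcyc
    exact hacyc i₁ (hpath i₁ hpar)
  intro h₁ h₂ hgen
  induction hgen with
  | single e =>
    obtain ⟨i, hpi, hmem⟩ := e
    exact ⟨i, hpi, fun j hj => Relation.TransGen.single (hj ▸ hmem)⟩
  | tail _ e ih =>
    obtain ⟨ib, hpib, hmem⟩ := e
    obtain ⟨i₁, hpi₁, hpath⟩ := ih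
    exact ⟨i₁, hpi₁, fun j hj =>
      (hpath ib hpib).tail (hj ▸ hmem)⟩
end
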